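/- arXiv:2601.14869 — 7 statements merged into one kernel-verified Lean document; each statement's English description precedes it below -/
import Mathlib

section
/- Let n ≥ 1, let J : ℝ → Matrix (Fin n) (Fin n) ℝ be continuous, and let x : ℝ → EuclideanSpace ℝ (Fin n) satisfy x'(s) = J(s) *ᵥ x(s) for all s in an interval [t₀, t₁]. Then for every t ∈ [t₀, t₁], ‖x(t)‖ ≤ ‖x(t₀)‖ · exp(∫_{t₀}^{t} λmax(H(s)) ds), where H(s) = (J(s) + J(s)ᵀ)/2 is the symmetric part of J(s) and λmax(H(s)) denotes the largest eigenvalue of the real symmetric matrix H(s). -/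
open Matrix

/-- The symmetric part `H = (J + Jᵀ)/2` of a real square matrix. -/
noncomputable def symPart {n : ℕ} (A : Matrix (Fin n) (Fin n) ℝ) : Matrix (Fin n) (Fin n) ℝ :=
  (1 / 2 : ℝ) • (A + Aᵀ)

theorem symPart_isHermitian {n : ℕ} (A : Matrix (Fin n) (Fin n) ℝ) :
    (symPart A).IsHermitian := by
  show (symPart A)ᴴ = symPart A
  ext i j
  simp [symPart, Matrix.conjTranspose_apply, Matrix.transpose_apply, Matrix.add_apply,
    Matrix.smul_apply, smul_eq_mul]
  ring

/-- The largest eigenvalue of a real symmetric (Hermitian) matrix. -/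
noncomputable def lamMax {n : ℕ} {A : Matrix (Fin n) (Fin n) ℝ} (hA : A.IsHermitian) : ℝ :=
  ⨆ i, hA.eigenvalues i

/-
The quadratic form of `J` equals that of its symmetric part `H`, so by the Rayleigh bound
`⟪x, J x⟫ ≤ λmax(H) ‖x‖²` and `g = ‖x‖²` satisfies `g' ≤ 2 λmax(H) g`. Multiplying by the
integrating factor `exp (-2 ∫ λmax(H))` turns this into an antitone function, which is the
time-dependent Gronwall bound for `g`; taking square roots gives the claim. The integral makes
sense because `λmax ∘ symPart` is `1`-Lipschitz for the `L²` operator norm (evaluate both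
quadratic forms at a top eigenvector), hence `s ↦ λmax(H(s))` is continuous.
-/

open Set Real
open scoped RealInnerProductSpace Matrix.Norms.L2Operator

theorem le_mul_exp_integral_of_hasDerivAt_le {g g' a : ℝ → ℝ} {t₀ t₁ : ℝ} (ha : Continuous a)
    (hg : ∀ s ∈ Icc t₀ t₁, HasDerivAt g (g' s) s) (hle : ∀ s ∈ Icc t₀ t₁, g' s ≤ a s * g s) :
    ∀ t ∈ Icc t₀ t₁, g t ≤ g t₀ * exp (∫ s in t₀..t, a s) := by
  set I : ℝ → ℝ := fun t => ∫ s in t₀..t, a s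
  have hI (s : ℝ) : HasDerivAt I (a s) s := (ha.integral_hasStrictDerivAt t₀ s).hasDerivAt
  have hφ (s) (hs : s ∈ Icc t₀ t₁) : HasDerivAt (fun s => g s * exp (-I s))
      (exp (-I s) * (g' s - a s * g s)) s :=
    ((hg s hs).mul (hI s).neg.exp).congr_deriv (by simp only [Pi.neg_apply]; ring)
  have hanti : AntitoneOn (fun s => g s * exp (-I s)) (Icc t₀ t₁) := by
    refine antitoneOn_of_hasDerivWithinAt_nonpos (convex_Icc t₀ t₁)
      (fun s hs => (hφ s hs).continuousAt.continuousWithinAt)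
      (fun s hs => (hφ s (interior_subset hs)).hasDerivWithinAt) fun s hs => ?_
    exact mul_nonpos_of_nonneg_of_nonpos (exp_pos _).le
      (sub_nonpos.2 (hle s (interior_subset hs)))
  intro t ht
  have h := hanti (left_mem_Icc.2 (ht.1.trans ht.2)) ht ht.1
  simp only [I, intervalIntegral.integral_same, neg_zero, exp_zero, mul_one] at h
  rwa [exp_neg, ← div_eq_mul_inv, div_le_iff₀ (exp_pos _)] at h

theorem norm_le_mul_exp_integral_of_inner_deriv_le {E : Type*} [NormedAddCommGroup E]
    [InnerProductSpace ℝ E] {x x' : ℝ → E} {a : ℝ → ℝ} {t₀ t₁ : ℝ} (ha : Continuous a)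
    (hx : ∀ s ∈ Icc t₀ t₁, HasDerivAt x (x' s) s)
    (hle : ∀ s ∈ Icc t₀ t₁, ⟪x s, x' s⟫ ≤ a s * ‖x s‖ ^ 2) :
    ∀ t ∈ Icc t₀ t₁, ‖x t‖ ≤ ‖x t₀‖ * exp (∫ s in t₀..t, a s) := by
  intro t ht
  have hsq := le_mul_exp_integral_of_hasDerivAt_le (a := fun s => 2 * a s)
    (continuous_const.mul ha) (fun s hs => (hx s hs).norm_sq)
    (fun s hs => by nlinarith [hle s hs]) t ht
  rw [intervalIntegral.integral_const_mul, two_mul, exp_add, ← sq, ← mul_pow] at hsq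
  exact (pow_le_pow_iff_left₀ (norm_nonneg _) (by positivity) two_ne_zero).1 hsq

variable {n : ℕ}

theorem inner_toLp_symPart_mulVec (A : Matrix (Fin n) (Fin n) ℝ) (v : EuclideanSpace ℝ (Fin n)) :
    ⟪v, WithLp.toLp 2 (symPart A *ᵥ v)⟫ = ⟪v, WithLp.toLp 2 (A *ᵥ v)⟫ := by
  have hT : (Aᵀ *ᵥ v) ⬝ᵥ v = (A *ᵥ v) ⬝ᵥ v := by
    rw [mulVec_transpose, ← dotProduct_mulVec, dotProduct_comm]
  rw [EuclideanSpace.inner_eq_star_dotProduct, EuclideanSpace.inner_eq_star_dotProduct]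
  simp only [symPart, star_trivial, smul_mulVec, add_mulVec, smul_dotProduct, add_dotProduct, hT]
  ring

theorem inner_toLp_mulVec_le_opNorm (A : Matrix (Fin n) (Fin n) ℝ) {v : EuclideanSpace ℝ (Fin n)}
    (hv : ‖v‖ = 1) : ⟪v, WithLp.toLp 2 (A *ᵥ v)⟫ ≤ ‖A‖ := by
  calc ⟪v, WithLp.toLp 2 (A *ᵥ v)⟫ ≤ ‖v‖ * ‖WithLp.toLp 2 (A *ᵥ v)‖ := real_inner_le_norm _ _
    _ ≤ 1 * (‖A‖ * 1) := by rw [← hv]; gcongr; exact A.l2_opNorm_mulVec v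
    _ = ‖A‖ := by ring

namespace Matrix.IsHermitian

variable {A : Matrix (Fin n) (Fin n) ℝ}

theorem eigenvalues_le_lamMax (hA : A.IsHermitian) (i : Fin n) : hA.eigenvalues i ≤ lamMax hA :=
  le_ciSup (finite_range _).bddAbove i

theorem inner_eigenvectorBasis_toLp_mulVec (hA : A.IsHermitian) (v : EuclideanSpace ℝ (Fin n))
    (i : Fin n) :
    ⟪hA.eigenvectorBasis i, WithLp.toLp 2 (A *ᵥ v)⟫ =
      hA.eigenvalues i * ⟪hA.eigenvectorBasis i, v⟫ := by
  have h := (isSymmetric_toEuclideanLin_iff.mpr hA) (hA.eigenvectorBasis i) v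
  simp only [toLpLin_apply] at h
  rw [← h, hA.mulVec_eigenvectorBasis, WithLp.toLp_smul, WithLp.toLp_ofLp, real_inner_smul_left]

theorem inner_toLp_mulVec_le_lamMax (hA : A.IsHermitian) (v : EuclideanSpace ℝ (Fin n)) :
    ⟪v, WithLp.toLp 2 (A *ᵥ v)⟫ ≤ lamMax hA * ‖v‖ ^ 2 := by
  set b := hA.eigenvectorBasis
  calc ⟪v, WithLp.toLp 2 (A *ᵥ v)⟫ = ∑ i, hA.eigenvalues i * ⟪b i, v⟫ ^ 2 := by
        rw [← b.sum_inner_mul_inner v]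
        refine Finset.sum_congr rfl fun i _ => ?_
        rw [inner_eigenvectorBasis_toLp_mulVec, real_inner_comm v]
        ring
    _ ≤ ∑ i, lamMax hA * ⟪b i, v⟫ ^ 2 := by
        gcongr with i; exact hA.eigenvalues_le_lamMax i
    _ = lamMax hA * ‖v‖ ^ 2 := by
        rw [← Finset.mul_sum, ← b.sum_sq_inner_right]

theorem exists_norm_eq_one_inner_toLp_mulVec_eq_lamMax [Nonempty (Fin n)] (hA : A.IsHermitian) :
    ∃ v : EuclideanSpace ℝ (Fin n), ‖v‖ = 1 ∧ ⟪v, WithLp.toLp 2 (A *ᵥ v)⟫ = lamMax hA := by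
  obtain ⟨i, hi⟩ := exists_eq_ciSup_of_finite (f := hA.eigenvalues)
  refine ⟨hA.eigenvectorBasis i, hA.eigenvectorBasis.orthonormal.1 i, ?_⟩
  rw [inner_eigenvectorBasis_toLp_mulVec, real_inner_self_eq_norm_sq,
    hA.eigenvectorBasis.orthonormal.1 i, one_pow, mul_one, hi, lamMax]

end Matrix.IsHermitian

theorem lipschitzWith_lamMax_symPart :
    LipschitzWith 1 fun A : Matrix (Fin n) (Fin n) ℝ => lamMax (symPart_isHermitian A) := by
  refine LipschitzWith.of_le_add fun A B => ?_
  rcases isEmpty_or_nonempty (Fin n) with hn | hn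
  · -- `lamMax` of a `0 × 0` matrix is the empty supremum, `0`
    simp [lamMax, dist_nonneg]
  obtain ⟨v, hv, hvA⟩ := (symPart_isHermitian A).exists_norm_eq_one_inner_toLp_mulVec_eq_lamMax
  have hvB := (symPart_isHermitian B).inner_toLp_mulVec_le_lamMax v
  rw [hv, one_pow, mul_one, inner_toLp_symPart_mulVec] at hvB
  calc lamMax (symPart_isHermitian A) = ⟪v, WithLp.toLp 2 (A *ᵥ v)⟫ := by
        rw [← hvA, inner_toLp_symPart_mulVec]
    _ = ⟪v, WithLp.toLp 2 (B *ᵥ v)⟫ + ⟪v, WithLp.toLp 2 ((A - B) *ᵥ v)⟫ := by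
        rw [sub_mulVec, WithLp.toLp_sub, inner_sub_right]; ring
    _ ≤ lamMax (symPart_isHermitian B) + dist A B := by
        rw [dist_eq_norm]; gcongr; exact inner_toLp_mulVec_le_opNorm _ hv

theorem stmt_1_general {n : ℕ} (J : ℝ → Matrix (Fin n) (Fin n) ℝ)
    (hJ : Continuous J)
    (x : ℝ → EuclideanSpace ℝ (Fin n)) (t₀ t₁ : ℝ)
    (hx : ∀ s ∈ Set.Icc t₀ t₁, HasDerivAt x (WithLp.toLp 2 (J s *ᵥ x s)) s)
    (t : ℝ) (ht : t ∈ Set.Icc t₀ t₁) :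
    ‖x t‖ ≤ ‖x t₀‖ * Real.exp (∫ s in t₀..t, lamMax (symPart_isHermitian (J s))) :=
  norm_le_mul_exp_integral_of_inner_deriv_le (lipschitzWith_lamMax_symPart.continuous.comp hJ) hx
    (fun s _ => by
      rw [← inner_toLp_symPart_mulVec]
      exact (symPart_isHermitian (J s)).inner_toLp_mulVec_le_lamMax (x s))
    t ht

theorem stmt_1 {n : ℕ} (hn : 1 ≤ n) (J : ℝ → Matrix (Fin n) (Fin n) ℝ)
    (hJ : Continuous J)
    (x : ℝ → EuclideanSpace ℝ (Fin n)) (t₀ t₁ : ℝ)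
    (hx : ∀ s ∈ Set.Icc t₀ t₁, HasDerivAt x (WithLp.toLp 2 (J s *ᵥ x s)) s)
    (t : ℝ) (ht : t ∈ Set.Icc t₀ t₁) :
    ‖x t‖ ≤ ‖x t₀‖ * Real.exp (∫ s in t₀..t, lamMax (symPart_isHermitian (J s))) :=
  stmt_1_general J hJ x t₀ t₁ hx t ht
end

section
/- Let n ≥ 1, let J : ℝ → Matrix (Fin n) (Fin n) ℝ be continuous, and let x : ℝ → EuclideanSpace ℝ (Fin n) satisfy x'(s) = J(s) *ᵥ x(s) for all s in an interval [t₀, t₁]. Then for every t ∈ [t₀, t₁], ‖x(t)‖ ≥ ‖x(t₀)‖ · exp(∫_{t₀}^{t} λmin(H(s)) ds), where H(s) = (J(s) + J(s)ᵀ)/2 is the symmetric part of J(s) and λmin(H(s)) denotes the smallest eigenvalue of the real symmetric matrix H(s). -/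
/-
Along a solution, `d/dt ‖x‖² = 2⟪x, J x⟫ = 2⟪x, H x⟫ ≥ 2 λmin(H) ‖x‖²` by the Rayleigh bound
for the symmetric part, so `‖x‖² · exp (-2 ∫ λmin(H))` is nondecreasing. The integral can be
differentiated because `λmin` is 1-Lipschitz for the operator norm (Weyl), hence continuous in `t`.
-/

open Matrix

/-- The smallest eigenvalue of a real symmetric (Hermitian) matrix. -/
noncomputable def lamMin {n : ℕ} {A : Matrix (Fin n) (Fin n) ℝ} (hA : A.IsHermitian) : ℝ :=
  ⨅ i, hA.eigenvalues i

open Filter Topology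
open scoped RealInnerProductSpace

section

variable {n : ℕ} {A B : Matrix (Fin n) (Fin n) ℝ}

theorem lamMin_le_eigenvalues (hA : A.IsHermitian) (i : Fin n) : lamMin hA ≤ hA.eigenvalues i :=
  ciInf_le (Set.finite_range _).bddBelow i

theorem toEuclideanLin_eigenvectorBasis (hA : A.IsHermitian) (i : Fin n) :
    toEuclideanLin A (hA.eigenvectorBasis i) = hA.eigenvalues i • hA.eigenvectorBasis i := by
  ext j
  exact congrFun (hA.mulVec_eigenvectorBasis i) j

theorem lamMin_mul_norm_sq_le_inner (hA : A.IsHermitian) (v : EuclideanSpace ℝ (Fin n)) :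
    lamMin hA * ‖v‖ ^ 2 ≤ ⟪v, toEuclideanLin A v⟫ := by
  set b := hA.eigenvectorBasis
  have hsym : (toEuclideanLin A).IsSymmetric := isSymmetric_toEuclideanLin_iff.2 hA
  have hquad : ⟪v, toEuclideanLin A v⟫ = ∑ i, hA.eigenvalues i * ⟪b i, v⟫ ^ 2 := by
    rw [← b.sum_inner_mul_inner]
    refine Finset.sum_congr rfl fun i _ => ?_
    rw [← hsym (b i) v, toEuclideanLin_eigenvectorBasis, real_inner_smul_left, real_inner_comm v]
    ring
  have hnorm : ‖v‖ ^ 2 = ∑ i, ⟪b i, v⟫ ^ 2 := by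
    rw [← real_inner_self_eq_norm_sq, ← b.sum_inner_mul_inner v v]
    simp only [real_inner_comm v, sq]
  rw [hquad, hnorm, Finset.mul_sum]
  gcongr with i
  exact lamMin_le_eigenvalues hA i

theorem lamMin_le_lamMin_add_norm (hA : A.IsHermitian) (hB : B.IsHermitian) :
    lamMin hA ≤ lamMin hB + ‖toEuclideanCLM (𝕜 := ℝ) (A - B)‖ := by
  rcases isEmpty_or_nonempty (Fin n) with _ | _
  · simp [lamMin, Real.iInf_of_isEmpty]
  obtain ⟨k, hk⟩ := Finite.exists_min hB.eigenvalues
  set v := hB.eigenvectorBasis k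
  have hv : ‖v‖ = 1 := hB.eigenvectorBasis.orthonormal.1 k
  have hBv : ⟪v, toEuclideanLin B v⟫ = lamMin hB := by
    rw [toEuclideanLin_eigenvectorBasis, real_inner_smul_right, real_inner_self_eq_norm_sq, hv,
      one_pow, mul_one]
    exact le_antisymm (le_ciInf hk) (lamMin_le_eigenvalues hB k)
  have hABv : ⟪v, toEuclideanLin (A - B) v⟫ ≤ ‖toEuclideanCLM (𝕜 := ℝ) (A - B)‖ :=
    calc ⟪v, toEuclideanLin (A - B) v⟫
      _ ≤ ‖v‖ * ‖toEuclideanCLM (𝕜 := ℝ) (A - B) v‖ := real_inner_le_norm _ _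
      _ ≤ ‖toEuclideanCLM (𝕜 := ℝ) (A - B)‖ := by
        simpa only [hv, one_mul, mul_one] using (toEuclideanCLM (𝕜 := ℝ) (A - B)).le_opNorm v
  have hAv := lamMin_mul_norm_sq_le_inner hA v
  rw [hv, one_pow, mul_one] at hAv
  rw [map_sub, LinearMap.sub_apply, inner_sub_right] at hABv
  linarith

theorem abs_lamMin_sub_lamMin_le (hA : A.IsHermitian) (hB : B.IsHermitian) :
    |lamMin hA - lamMin hB| ≤ ‖toEuclideanCLM (𝕜 := ℝ) (A - B)‖ := by
  have hAB := lamMin_le_lamMin_add_norm hA hB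
  have hBA := lamMin_le_lamMin_add_norm hB hA
  rw [← neg_sub, map_neg, norm_neg] at hBA
  exact abs_sub_le_iff.2 ⟨by linarith, by linarith⟩

theorem Continuous.lamMin {X : Type*} [TopologicalSpace X] {A : X → Matrix (Fin n) (Fin n) ℝ}
    (hA : Continuous A) (hH : ∀ x, (A x).IsHermitian) : Continuous fun x => lamMin (hH x) := by
  have hCLM : Continuous (toEuclideanCLM (n := Fin n) (𝕜 := ℝ)) :=
    LinearMap.continuous_of_finiteDimensional
      (toEuclideanCLM (n := Fin n) (𝕜 := ℝ)).toAlgEquiv.toLinearMap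
  refine continuous_iff_continuousAt.2 fun x => tendsto_iff_dist_tendsto_zero.2 ?_
  have hdiff : Tendsto (fun y => ‖toEuclideanCLM (𝕜 := ℝ) (A y - A x)‖) (𝓝 x) (𝓝 0) := by
    simpa using ((hCLM.comp (hA.sub (continuous_const (y := A x)))).norm).tendsto x
  exact squeeze_zero (fun _ => dist_nonneg) (fun y => abs_lamMin_sub_lamMin_le (hH y) (hH x)) hdiff

theorem inner_toEuclideanLin_symPart (A : Matrix (Fin n) (Fin n) ℝ)
    (v : EuclideanSpace ℝ (Fin n)) :
    ⟪v, toEuclideanLin (symPart A) v⟫ = ⟪v, toEuclideanLin A v⟫ := by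
  have hT : ⟪v, toEuclideanLin Aᵀ v⟫ = ⟪v, toEuclideanLin A v⟫ := by
    rw [← conjTranspose_eq_transpose_of_trivial, toEuclideanLin_conjTranspose_eq_adjoint,
      LinearMap.adjoint_inner_right, real_inner_comm]
  rw [symPart, map_smul, map_add, LinearMap.smul_apply, LinearMap.add_apply, inner_smul_right,
    inner_add_right, hT]
  ring

theorem continuous_symPart : Continuous (symPart (n := n)) := by
  unfold symPart
  fun_prop

theorem lamMin_symPart_mul_norm_sq_le_inner (A : Matrix (Fin n) (Fin n) ℝ)
    (v : EuclideanSpace ℝ (Fin n)) :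
    lamMin (symPart_isHermitian A) * ‖v‖ ^ 2 ≤ ⟪v, WithLp.toLp 2 (A *ᵥ v)⟫ :=
  (lamMin_mul_norm_sq_le_inner _ v).trans_eq (inner_toEuclideanLin_symPart A v)

end

theorem mul_exp_integral_le_of_mul_le_deriv {φ φ' f : ℝ → ℝ} {a b : ℝ} (hab : a ≤ b)
    (hf : Continuous f) (hφ : ∀ s ∈ Set.Icc a b, HasDerivAt φ (φ' s) s)
    (hle : ∀ s ∈ Set.Icc a b, f s * φ s ≤ φ' s) :
    φ a * Real.exp (∫ s in a..b, f s) ≤ φ b := by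
  set F : ℝ → ℝ := fun t => ∫ s in a..t, f s
  have hF (t : ℝ) : HasDerivAt F (f t) t :=
    intervalIntegral.integral_hasDerivAt_right (hf.intervalIntegrable _ _)
      (hf.stronglyMeasurableAtFilter _ _) hf.continuousAt
  have hψ (s) (hs : s ∈ Set.Icc a b) : HasDerivAt (fun t => φ t * Real.exp (-F t))
      ((φ' s - f s * φ s) * Real.exp (-F s)) s :=
    ((hφ s hs).mul (hF s).neg.exp).congr_deriv (by simp only [Pi.neg_apply]; ring)
  have hmono : MonotoneOn (fun t => φ t * Real.exp (-F t)) (Set.Icc a b) :=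
    monotoneOn_of_hasDerivWithinAt_nonneg (convex_Icc a b)
      (fun s hs => (hψ s hs).continuousAt.continuousWithinAt)
      (fun s hs => (hψ s (interior_subset hs)).hasDerivWithinAt)
      (fun s hs => mul_nonneg (sub_nonneg.2 (hle s (interior_subset hs))) (Real.exp_nonneg _))
  have hab' : φ a ≤ φ b * Real.exp (-F b) := by
    simpa [F] using hmono (Set.left_mem_Icc.2 hab) (Set.right_mem_Icc.2 hab) hab
  calc φ a * Real.exp (F b) ≤ φ b * Real.exp (-F b) * Real.exp (F b) := by gcongr
    _ = φ b := by rw [mul_assoc, ← Real.exp_add, neg_add_cancel, Real.exp_zero, mul_one]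

theorem norm_mul_exp_integral_le_of_mul_norm_sq_le_inner {E : Type*} [NormedAddCommGroup E]
    [InnerProductSpace ℝ E] {u u' : ℝ → E} {f : ℝ → ℝ} {a b : ℝ} (hab : a ≤ b)
    (hf : Continuous f) (hu : ∀ s ∈ Set.Icc a b, HasDerivAt u (u' s) s)
    (hle : ∀ s ∈ Set.Icc a b, f s * ‖u s‖ ^ 2 ≤ ⟪u s, u' s⟫) :
    ‖u a‖ * Real.exp (∫ s in a..b, f s) ≤ ‖u b‖ := by
  have hsq := mul_exp_integral_le_of_mul_le_deriv hab (hf.const_mul 2)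
    (fun s hs => (hu s hs).norm_sq) (fun s hs => by linarith [hle s hs])
  rw [intervalIntegral.integral_const_mul, two_mul, Real.exp_add, ← sq, ← mul_pow] at hsq
  exact pow_le_pow_iff_left₀ (by positivity) (norm_nonneg _) two_ne_zero |>.1 hsq

theorem stmt_2_general {n : ℕ} (J : ℝ → Matrix (Fin n) (Fin n) ℝ)
    (hJ : Continuous J)
    (x : ℝ → EuclideanSpace ℝ (Fin n)) (t₀ t₁ : ℝ)
    (hx : ∀ s ∈ Set.Icc t₀ t₁, HasDerivAt x (WithLp.toLp 2 (J s *ᵥ x s)) s)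
    (t : ℝ) (ht : t ∈ Set.Icc t₀ t₁) :
    ‖x t₀‖ * Real.exp (∫ s in t₀..t, lamMin (symPart_isHermitian (J s))) ≤ ‖x t‖ :=
  norm_mul_exp_integral_le_of_mul_norm_sq_le_inner ht.1
    ((continuous_symPart.comp hJ).lamMin _)
    (fun s hs => hx s ⟨hs.1, hs.2.trans ht.2⟩)
    (fun s _ => lamMin_symPart_mul_norm_sq_le_inner (J s) (x s))

theorem stmt_2 {n : ℕ} (hn : 1 ≤ n) (J : ℝ → Matrix (Fin n) (Fin n) ℝ)
    (hJ : Continuous J)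
    (x : ℝ → EuclideanSpace ℝ (Fin n)) (t₀ t₁ : ℝ)
    (hx : ∀ s ∈ Set.Icc t₀ t₁, HasDerivAt x (WithLp.toLp 2 (J s *ᵥ x s)) s)
    (t : ℝ) (ht : t ∈ Set.Icc t₀ t₁) :
    ‖x t₀‖ * Real.exp (∫ s in t₀..t, lamMin (symPart_isHermitian (J s))) ≤ ‖x t‖ :=
  stmt_2_general J hJ x t₀ t₁ hx t ht
end

section
/- Let n ≥ 1 and let J, B, Σ : ℝ → Matrix (Fin n) (Fin n) ℝ. Suppose at time t: Σ(t) is positive semidefinite and Σ is differentiable with Σ'(t) = J(t)Σ(t) + Σ(t)J(t)ᵀ + B(t). Then the derivative of s ↦ tr(Σ(s)) at t satisfies (d/dt) tr(Σ(t)) ≤ 2 · λmax(H(t)) · tr(Σ(t)) + tr(B(t)), where H(t) = (J(t) + J(t)ᵀ)/2 is the symmetric part of J(t) and λmax(H(t)) denotes the largest eigenvalue of the real symmetric matrix H(t). -/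
open Matrix

attribute [local instance] Matrix.normedAddCommGroup Matrix.normedSpace

/-!
Since the trace is linear, `(tr Σ)' = tr (JΣ + ΣJᵀ) + tr B = 2 tr (HΣ) + tr B`. The matrix
`λmax(H) • 1 - H` is positive semidefinite, and the trace of a product of two positive
semidefinite matrices is nonnegative, so `tr (HΣ) ≤ λmax(H) tr Σ`.
-/

section

open scoped MatrixOrder ComplexOrder

variable {ι 𝕜 : Type*} [Fintype ι] [RCLike 𝕜]

theorem Matrix.PosSemidef.trace_mul_nonneg {P S : Matrix ι ι 𝕜} (hP : P.PosSemidef)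
    (hS : S.PosSemidef) : 0 ≤ (P * S).trace := by
  classical
  set R := CFC.sqrt S
  have hR : Rᴴ = R := (CFC.sqrt_nonneg S).posSemidef.isHermitian
  calc 0 ≤ (R * P * Rᴴ).trace := (hP.mul_mul_conjTranspose_same R).trace_nonneg
    _ = (P * S).trace := by
      rw [hR, Matrix.trace_mul_cycle, CFC.sqrt_mul_sqrt_self S hS.nonneg, Matrix.trace_mul_comm]

theorem HasDerivAt.matrix_trace {f : ℝ → Matrix ι ι ℝ} {f' : Matrix ι ι ℝ} {t : ℝ}
    (hf : HasDerivAt f f' t) : HasDerivAt (fun s => (f s).trace) f'.trace t :=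
  (LinearMap.toContinuousLinearMap (Matrix.traceLinearMap ι ℝ ℝ)).hasFDerivAt.comp_hasDerivAt t hf

variable {n : ℕ}

theorem eigenvalues_le_lamMax {A : Matrix (Fin n) (Fin n) ℝ} (hA : A.IsHermitian) (i : Fin n) :
    hA.eigenvalues i ≤ lamMax hA :=
  le_ciSup (Set.finite_range _).bddAbove i

theorem le_lamMax_smul_one {A : Matrix (Fin n) (Fin n) ℝ} (hA : A.IsHermitian) :
    A ≤ lamMax hA • (1 : Matrix (Fin n) (Fin n) ℝ) := by
  rw [← Algebra.algebraMap_eq_smul_one]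
  refine le_algebraMap_of_spectrum_le (fun x hx => ?_) hA.isSelfAdjoint
  obtain ⟨i, rfl⟩ := hA.spectrum_real_eq_range_eigenvalues ▸ hx
  exact eigenvalues_le_lamMax hA i

theorem trace_mul_le_lamMax_mul_trace {A S : Matrix (Fin n) (Fin n) ℝ} (hA : A.IsHermitian)
    (hS : S.PosSemidef) : (A * S).trace ≤ lamMax hA * S.trace := by
  have h := (Matrix.le_iff.mp (le_lamMax_smul_one hA)).trace_mul_nonneg hS
  rwa [Matrix.sub_mul, Matrix.smul_mul, Matrix.one_mul, Matrix.trace_sub, Matrix.trace_smul,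
    smul_eq_mul, sub_nonneg] at h

theorem trace_mul_add_mul_transpose_add (J S B : Matrix (Fin n) (Fin n) ℝ) :
    (J * S + S * Jᵀ + B).trace = 2 * (symPart J * S).trace + B.trace := by
  rw [Matrix.trace_add, Matrix.trace_add, Matrix.trace_mul_comm S, symPart, Matrix.smul_mul,
    Matrix.trace_smul, Matrix.add_mul, Matrix.trace_add, smul_eq_mul]
  ring

end

theorem stmt_8_general {n : ℕ} (J B Sg : ℝ → Matrix (Fin n) (Fin n) ℝ) (t : ℝ)
    (hpsd : (Sg t).PosSemidef)
    (hSg : HasDerivAt Sg (J t * Sg t + Sg t * (J t)ᵀ + B t) t) :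
    deriv (fun s => (Sg s).trace) t ≤
      2 * lamMax (symPart_isHermitian (J t)) * (Sg t).trace + (B t).trace := by
  rw [hSg.matrix_trace.deriv, trace_mul_add_mul_transpose_add]
  have := trace_mul_le_lamMax_mul_trace (symPart_isHermitian (J t)) hpsd
  linarith

theorem stmt_8 {n : ℕ} (hn : 1 ≤ n) (J B Sg : ℝ → Matrix (Fin n) (Fin n) ℝ) (t : ℝ)
    (hpsd : (Sg t).PosSemidef)
    (hSg : HasDerivAt Sg (J t * Sg t + Sg t * (J t)ᵀ + B t) t) :
    deriv (fun s => (Sg s).trace) t ≤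
      2 * lamMax (symPart_isHermitian (J t)) * (Sg t).trace + (B t).trace :=
  stmt_8_general J B Sg t hpsd hSg
end

section
/- (Modal decomposition, Proposition 1.) Let n ≥ 1. Let J, B, Σ : ℝ → Matrix (Fin n) (Fin n) ℂ and V, Λ : ℝ → Matrix (Fin n) (Fin n) ℂ. Suppose at time t: J(t) has real entries and J(t) = V(t) Λ(t) V(t)⁻¹ with Λ(t) diagonal and V(t) invertible in a neighbourhood of t; V is differentiable at t; and Σ is differentiable at t with Σ'(t) = J(t)Σ(t) + Σ(t)J(t)ᵀ + B(t). Define Σ_y(s) = V(s)⁻¹ Σ(s) (V(s)⁻¹)ᴴ, B_y(s) = V(s)⁻¹ B(s) (V(s)⁻¹)ᴴ and M(t) = V(t)⁻¹ V'(t), where (·)ᴴ denotes the conjugate transpose. Then Σ_y is differentiable at t with Σ_y'(t) = Λ(t)Σ_y(t) + Σ_y(t)Λ(t)ᴴ + B_y(t) − M(t)Σ_y(t) − Σ_y(t)M(t)ᴴ. -/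
/-!
Write `W = V⁻¹`, so that `Σ_y = W Σ Wᴴ`. The product rule and `W' = -W V' W` give
`Σ_y' = W Σ' Wᴴ - M Σ_y - Σ_y Mᴴ`, and substituting the Lyapunov equation `Σ' = JΣ + ΣJᴴ + B`
(for real `J`, `Jᵀ = Jᴴ`) leaves only the intertwining relation `W J = Λ W`, which is the
eigendecomposition `J = V Λ V⁻¹`.
-/

open Matrix

namespace Matrix

section Deriv

variable {𝕜 R : Type*} [NontriviallyNormedField 𝕜] {m : Type*} [Fintype m] {t : 𝕜}

-- `HasDerivAt` only sees the topology, so we may borrow the `L∞` operator norm, which makes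
-- square matrices a normed ring inducing the usual topology.
theorem hasDerivAt_mul [DecidableEq m] [NormedRing R] [NormedAlgebra 𝕜 R]
    {f g : 𝕜 → Matrix m m R} {f' g' : Matrix m m R}
    (hf : HasDerivAt f f' t) (hg : HasDerivAt g g' t) :
    HasDerivAt (fun s => f s * g s) (f' * g t + f t * g') t :=
  let _ := Matrix.linftyOpNormedRing (n := m) (α := R)
  let _ := Matrix.linftyOpNormedAlgebra (n := m) (R := 𝕜) (α := R)
  hf.mul hg

theorem hasDerivAt_inv [DecidableEq m] [NormedCommRing R] [NormedAlgebra 𝕜 R] [CompleteSpace R]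
    {f : 𝕜 → Matrix m m R} {f' : Matrix m m R} (hf : HasDerivAt f f' t) (hft : IsUnit (f t)) :
    HasDerivAt (fun s => (f s)⁻¹) (-((f t)⁻¹ * f' * (f t)⁻¹)) t := by
  let _ := Matrix.linftyOpNormedRing (n := m) (α := R)
  let _ := Matrix.linftyOpNormedAlgebra (n := m) (R := 𝕜) (α := R)
  -- stated for the operator-norm uniformity, which is only defeq (not reducibly) to the product one
  have : @CompleteSpace (Matrix m m R) PseudoMetricSpace.toUniformSpace :=
    inferInstanceAs (CompleteSpace (m → m → R))
  obtain ⟨u, hu⟩ := hft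
  have hinv : HasFDerivAt Ring.inverse _ (f t) := hu ▸ hasFDerivAt_ringInverse (𝕜 := 𝕜) u
  have hcomp := hinv.comp_hasDerivAt t hf
  simp only [Function.comp_def, ← nonsing_inv_eq_ringInverse, coe_units_inv, hu] at hcomp
  exact hcomp

theorem hasDerivAt_conjTranspose [StarRing 𝕜] [TrivialStar 𝕜] [NormedRing R] [StarRing R]
    [NormedAlgebra 𝕜 R] [StarModule 𝕜 R] [ContinuousStar R] {n : Type*} [Fintype n]
    {f : 𝕜 → Matrix m n R} {f' : Matrix m n R} (hf : HasDerivAt f f' t) :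
    HasDerivAt (fun s => (f s)ᴴ) f'ᴴ t :=
  hasDerivAt_pi.2 fun i => hasDerivAt_pi.2 fun j => (hasDerivAt_pi.1 (hasDerivAt_pi.1 hf j) i).star

end Deriv

theorem transpose_eq_conjTranspose_of_im_eq_zero {m n : Type*} {J : Matrix m n ℂ}
    (hJ : ∀ i j, (J i j).im = 0) : Jᵀ = Jᴴ := by
  ext i j
  exact (Complex.conj_eq_iff_im.2 (hJ j i)).symm

theorem lyapunov_rhs_conj_eq {m R : Type*} [Fintype m] [Ring R] [StarRing R]
    {W J L S B V' : Matrix m m R} (hWJ : W * J = L * W) :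
    (-(W * V' * W) * S + W * (J * S + S * Jᴴ + B)) * Wᴴ + W * S * (-(W * V' * W))ᴴ
      = L * (W * S * Wᴴ) + W * S * Wᴴ * Lᴴ + W * B * Wᴴ
        - W * V' * (W * S * Wᴴ) - W * S * Wᴴ * (W * V')ᴴ := by
  have hJW : Jᴴ * Wᴴ = Wᴴ * Lᴴ := by rw [← conjTranspose_mul, hWJ, conjTranspose_mul]
  calc _ = W * J * S * Wᴴ + W * S * (Jᴴ * Wᴴ) + W * B * Wᴴ
        - W * V' * (W * S * Wᴴ) - W * S * Wᴴ * (W * V')ᴴ := by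
          simp only [conjTranspose_mul, conjTranspose_neg]; noncomm_ring
    _ = _ := by rw [hWJ, hJW]; noncomm_ring

end Matrix

theorem stmt_10_general {n : ℕ}
    (J B Sg V L : ℝ → Matrix (Fin n) (Fin n) ℂ)
    (V' : Matrix (Fin n) (Fin n) ℂ) (t : ℝ)
    (hJreal : ∀ i j, (J t i j).im = 0)
    (hdecomp : J t = V t * L t * (V t)⁻¹)
    (hVinv : ∀ᶠ s in nhds t, IsUnit (V s))
    (hV : HasDerivAt V V' t)
    (hSg : HasDerivAt Sg (J t * Sg t + Sg t * (J t)ᵀ + B t) t) :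
    HasDerivAt (fun s => (V s)⁻¹ * Sg s * ((V s)⁻¹)ᴴ)
      (L t * ((V t)⁻¹ * Sg t * ((V t)⁻¹)ᴴ) + ((V t)⁻¹ * Sg t * ((V t)⁻¹)ᴴ) * (L t)ᴴ
        + (V t)⁻¹ * B t * ((V t)⁻¹)ᴴ
        - ((V t)⁻¹ * V') * ((V t)⁻¹ * Sg t * ((V t)⁻¹)ᴴ)
        - ((V t)⁻¹ * Sg t * ((V t)⁻¹)ᴴ) * ((V t)⁻¹ * V')ᴴ) t := by
  have hVt : IsUnit (V t) := hVinv.self_of_nhds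
  have hWJ : (V t)⁻¹ * J t = L t * (V t)⁻¹ := by
    rw [hdecomp, mul_assoc, nonsing_inv_mul_cancel_left _ _ ((isUnit_iff_isUnit_det _).1 hVt)]
  have hW := hasDerivAt_inv hV hVt
  rw [← lyapunov_rhs_conj_eq hWJ, ← transpose_eq_conjTranspose_of_im_eq_zero hJreal]
  exact hasDerivAt_mul (hasDerivAt_mul hW hSg) (hasDerivAt_conjTranspose hW)

theorem stmt_10 {n : ℕ} (hn : 1 ≤ n)
    (J B Sg V L : ℝ → Matrix (Fin n) (Fin n) ℂ)
    (V' : Matrix (Fin n) (Fin n) ℂ) (t : ℝ)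
    (hJreal : ∀ i j, (J t i j).im = 0)
    (hdecomp : J t = V t * L t * (V t)⁻¹)
    (hLdiag : (L t).IsDiag)
    (hVinv : ∀ᶠ s in nhds t, IsUnit (V s))
    (hV : HasDerivAt V V' t)
    (hSg : HasDerivAt Sg (J t * Sg t + Sg t * (J t)ᵀ + B t) t) :
    HasDerivAt (fun s => (V s)⁻¹ * Sg s * ((V s)⁻¹)ᴴ)
      (L t * ((V t)⁻¹ * Sg t * ((V t)⁻¹)ᴴ) + ((V t)⁻¹ * Sg t * ((V t)⁻¹)ᴴ) * (L t)ᴴ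
        + (V t)⁻¹ * B t * ((V t)⁻¹)ᴴ
        - ((V t)⁻¹ * V') * ((V t)⁻¹ * Sg t * ((V t)⁻¹)ᴴ)
        - ((V t)⁻¹ * Sg t * ((V t)⁻¹)ᴴ) * ((V t)⁻¹ * V')ᴴ) t :=
  stmt_10_general J B Sg V L V' t hJreal hdecomp hVinv hV hSg
end

section
/- (Modal decomposition, scalar form, Proposition 1.) Under the hypotheses of the modal decomposition — J(t) real with J(t) = V(t)Λ(t)V(t)⁻¹, Λ(t) = diag(λ₁(t),…,λₙ(t)), V differentiable and invertible near t, Σ differentiable at t with Σ'(t) = J(t)Σ(t) + Σ(t)J(t)ᵀ + B(t), Σ_y = V⁻¹ Σ V⁻ᴴ, B_y = V⁻¹ B V⁻ᴴ, M = V⁻¹ V' — and assuming additionally that Σ(t) is real symmetric (so that Σ_y(t) is Hermitian), the i-th diagonal modal variance p_i(s) = (Σ_y(s))_{ii} is differentiable at t with real derivative p_i'(t) = 2·Re(λ_i(t))·p_i(t) + (B_y(t))_{ii} − 2·Re(∑_b M(t)_{ib}·(Σ_y(t))_{bi}) for each i. -/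
/-!
Write `W = V⁻¹`. Cramer's rule makes `W` differentiable wherever `V` is invertible, and
differentiating `W V = 1` gives `W' = -W V' W`. The product rule applied to `Σ_y = W Σ Wᴴ`, the
Lyapunov equation, `W J = Λ W` and `Jᵀ = Jᴴ` (as `J` is real) then give the matrix equation
`Σ_y' = Λ Σ_y + Σ_y Λᴴ + B_y - M Σ_y - Σ_y Mᴴ`.
On the diagonal, `Λ` diagonal turns the first two terms into `2 Re λᵢ pᵢ`, and since `Σ_y` is
Hermitian, `Σ_y Mᴴ = (M Σ_y)ᴴ`, so the last two terms give `2 Re (M Σ_y)ᵢᵢ`.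
-/

open Matrix

attribute [local instance] Matrix.normedAddCommGroup Matrix.normedSpace

section MatrixCalculus

variable {𝕜 : Type*} [NontriviallyNormedField 𝕜] {l m n : Type*} {t : 𝕜}

section Entrywise

variable {E : Type*} [NormedAddCommGroup E] [NormedSpace 𝕜 E]

theorem Matrix.hasDerivAt_iff [Fintype n] {f : 𝕜 → Matrix m n E} {f' : Matrix m n E} :
    HasDerivAt f f' t ↔ ∀ i j, HasDerivAt (fun s => f s i j) (f' i j) t :=
  hasDerivAt_pi.trans <| forall_congr' fun _ => hasDerivAt_pi

theorem Matrix.differentiableAt_iff [Fintype n] {f : 𝕜 → Matrix m n E} :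
    DifferentiableAt 𝕜 f t ↔ ∀ i j, DifferentiableAt 𝕜 (fun s => f s i j) t :=
  differentiableAt_pi.trans <| forall_congr' fun _ => differentiableAt_pi

theorem HasDerivAt.matrix_conjTranspose [StarRing 𝕜] [TrivialStar 𝕜] [StarAddMonoid E]
    [StarModule 𝕜 E] [ContinuousStar E] [Fintype m] [Fintype n] {f : 𝕜 → Matrix m n E}
    {f' : Matrix m n E} (hf : HasDerivAt f f' t) : HasDerivAt (fun s => (f s)ᴴ) f'ᴴ t := by
  rw [Matrix.hasDerivAt_iff] at hf ⊢
  exact fun i j => (hf j i).star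

end Entrywise

variable {𝔸 : Type*} [NormedCommRing 𝔸] [NormedAlgebra 𝕜 𝔸]

theorem HasDerivAt.matrix_mul [Fintype m] [Fintype n] {f : 𝕜 → Matrix l m 𝔸}
    {g : 𝕜 → Matrix m n 𝔸} {f' : Matrix l m 𝔸} {g' : Matrix m n 𝔸}
    (hf : HasDerivAt f f' t) (hg : HasDerivAt g g' t) :
    HasDerivAt (fun s => f s * g s) (f' * g t + f t * g') t := by
  rw [Matrix.hasDerivAt_iff] at hf hg ⊢
  intro i j
  simp only [Matrix.add_apply, Matrix.mul_apply, ← Finset.sum_add_distrib]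
  exact HasDerivAt.fun_sum fun k _ => (hf i k).mul (hg k j)

theorem DifferentiableAt.matrix_det [Fintype n] [DecidableEq n] {f : 𝕜 → Matrix n n 𝔸}
    (hf : DifferentiableAt 𝕜 f t) : DifferentiableAt 𝕜 (fun s => (f s).det) t := by
  rw [Matrix.differentiableAt_iff] at hf
  simp only [Matrix.det_apply']
  exact DifferentiableAt.fun_sum fun σ _ =>
    (DifferentiableAt.fun_finsetProd fun k _ => hf (σ k) k).const_mul _

theorem DifferentiableAt.matrix_updateRow [Fintype n] [DecidableEq m] {f : 𝕜 → Matrix m n 𝔸}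
    (hf : DifferentiableAt 𝕜 f t) (i : m) (r : n → 𝔸) :
    DifferentiableAt 𝕜 (fun s => (f s).updateRow i r) t := by
  rw [Matrix.differentiableAt_iff] at hf ⊢
  intro a b
  by_cases h : a = i
  · simp [Matrix.updateRow_apply, h]
  · simpa [Matrix.updateRow_apply, h] using hf a b

theorem DifferentiableAt.matrix_adjugate [Fintype n] [DecidableEq n] {f : 𝕜 → Matrix n n 𝔸}
    (hf : DifferentiableAt 𝕜 f t) : DifferentiableAt 𝕜 (fun s => (f s).adjugate) t := by
  rw [Matrix.differentiableAt_iff]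
  intro i j
  simp only [Matrix.adjugate_apply]
  exact (hf.matrix_updateRow j _).matrix_det

end MatrixCalculus

section MatrixInverse

variable {𝕜 𝕂 : Type*} [NontriviallyNormedField 𝕜] [NormedField 𝕂] [NormedAlgebra 𝕜 𝕂]
  {n : Type*} [Fintype n] [DecidableEq n] {t : 𝕜} {f : 𝕜 → Matrix n n 𝕂}

theorem DifferentiableAt.matrix_inv (hf : DifferentiableAt 𝕜 f t) (ht : IsUnit (f t)) :
    DifferentiableAt 𝕜 (fun s => (f s)⁻¹) t := by
  have hdet : (f t).det ≠ 0 := ((isUnit_iff_isUnit_det _).mp ht).ne_zero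
  simp only [Matrix.inv_def, Ring.inverse_eq_inv']
  exact (hf.matrix_det.inv hdet).smul hf.matrix_adjugate

theorem HasDerivAt.matrix_inv {f' : Matrix n n 𝕂} (hf : HasDerivAt f f' t) (ht : IsUnit (f t)) :
    HasDerivAt (fun s => (f s)⁻¹) (-((f t)⁻¹ * f' * (f t)⁻¹)) t := by
  have hdet : IsUnit (f t).det := (isUnit_iff_isUnit_det _).mp ht
  have hinv := (hf.differentiableAt.matrix_inv ht).hasDerivAt
  set D := _root_.deriv (fun s => (f s)⁻¹) t
  have hone : (fun s => (f s)⁻¹ * f s) =ᶠ[nhds t] fun _ => 1 := by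
    filter_upwards [hf.differentiableAt.matrix_det.continuousAt.eventually_ne hdet.ne_zero]
      with s hs using nonsing_inv_mul _ (isUnit_iff_ne_zero.mpr hs)
  have hD : D * f t + (f t)⁻¹ * f' = 0 :=
    (hinv.matrix_mul hf).unique ((hasDerivAt_const t 1).congr_of_eventuallyEq hone)
  have hD' : D = -((f t)⁻¹ * f' * (f t)⁻¹) :=
    calc D = (D * f t + (f t)⁻¹ * f' - (f t)⁻¹ * f') * (f t)⁻¹ := by
          rw [add_sub_cancel_right, Matrix.mul_assoc, mul_nonsing_inv _ hdet, mul_one]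
      _ = -((f t)⁻¹ * f' * (f t)⁻¹) := by rw [hD, zero_sub, Matrix.neg_mul]
  rw [← hD']
  exact hinv

end MatrixInverse

section ComplexMatrix

variable {n : Type*}

theorem Matrix.conjTranspose_eq_transpose_of_im_eq_zero {m : Type*} {A : Matrix m n ℂ}
    (hA : ∀ i j, (A i j).im = 0) : Aᴴ = Aᵀ := by
  ext i j
  simp [Complex.conj_eq_iff_im.mpr (hA j i)]

variable [Fintype n]

theorem Matrix.IsHermitian.mul_add_mul_conjTranspose_apply_self {Y : Matrix n n ℂ}
    (hY : Y.IsHermitian) (M : Matrix n n ℂ) (i : n) :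
    (M * Y + Y * Mᴴ) i i = 2 * (((M * Y) i i).re : ℂ) := by
  rw [← hY.eq, ← conjTranspose_mul, hY.eq, Matrix.add_apply, conjTranspose_apply,
    Complex.star_def, Complex.add_conj]
  push_cast
  rfl

theorem Matrix.IsDiag.mul_add_mul_conjTranspose_apply_self [DecidableEq n] {L : Matrix n n ℂ}
    (hL : L.IsDiag) (Y : Matrix n n ℂ) (i : n) :
    (L * Y + Y * Lᴴ) i i = 2 * ((L i i).re : ℂ) * Y i i := by
  obtain ⟨d, rfl⟩ : ∃ d, diagonal d = L := ⟨_, hL.diagonal_diag⟩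
  rw [Matrix.add_apply, diagonal_conjTranspose, diagonal_mul, mul_diagonal, diagonal_apply_eq,
    Pi.star_apply, mul_comm (Y i i), ← add_mul, Complex.star_def, Complex.add_conj]
  push_cast
  rfl

end ComplexMatrix

section Modal

variable {n : Type*} [Fintype n] [DecidableEq n]

noncomputable def modalTransform {R : Type*} [CommRing R] [StarRing R] (V X : Matrix n n R) :
    Matrix n n R :=
  V⁻¹ * X * (V⁻¹)ᴴ

theorem Matrix.IsHermitian.modalTransform {V X : Matrix n n ℂ} (hX : X.IsHermitian) :
    (modalTransform V X).IsHermitian :=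
  isHermitian_mul_mul_conjTranspose _ hX

theorem modalTransform_lyapunov {V J L Sg B : Matrix n n ℂ} (hJ : Jᴴ = Jᵀ)
    (hVJ : V⁻¹ * J = L * V⁻¹) :
    modalTransform V (J * Sg + Sg * Jᵀ + B) =
      L * modalTransform V Sg + modalTransform V Sg * Lᴴ + modalTransform V B := by
  have hJV : Jᵀ * (V⁻¹)ᴴ = (V⁻¹)ᴴ * Lᴴ := by
    rw [← hJ, ← conjTranspose_mul, hVJ, conjTranspose_mul]
  simp only [modalTransform, Matrix.mul_add, Matrix.add_mul, ← Matrix.mul_assoc, hVJ]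
  simp only [Matrix.mul_assoc, hJV]

theorem hasDerivAt_modalTransform {V X : ℝ → Matrix n n ℂ} {V' X' : Matrix n n ℂ} {t : ℝ}
    (hV : HasDerivAt V V' t) (hVt : IsUnit (V t)) (hX : HasDerivAt X X' t) :
    HasDerivAt (fun s => modalTransform (V s) (X s))
      (modalTransform (V t) X' - ((V t)⁻¹ * V' * modalTransform (V t) (X t)
        + modalTransform (V t) (X t) * ((V t)⁻¹ * V')ᴴ)) t := by
  have hW := hV.matrix_inv hVt
  refine ((hW.matrix_mul hX).matrix_mul hW.matrix_conjTranspose).congr_deriv ?_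
  simp only [modalTransform, conjTranspose_neg, conjTranspose_mul, Matrix.neg_mul, Matrix.mul_neg,
    Matrix.add_mul, Matrix.mul_assoc]
  abel

theorem hasDerivAt_modalTransform_of_lyapunov {V Sg : ℝ → Matrix n n ℂ}
    {J L B V' : Matrix n n ℂ} {t : ℝ} (hJ : Jᴴ = Jᵀ) (hJL : J = V t * L * (V t)⁻¹)
    (hV : HasDerivAt V V' t) (hVt : IsUnit (V t))
    (hSg : HasDerivAt Sg (J * Sg t + Sg t * Jᵀ + B) t) :
    HasDerivAt (fun s => modalTransform (V s) (Sg s))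
      (L * modalTransform (V t) (Sg t) + modalTransform (V t) (Sg t) * Lᴴ + modalTransform (V t) B
        - ((V t)⁻¹ * V' * modalTransform (V t) (Sg t)
          + modalTransform (V t) (Sg t) * ((V t)⁻¹ * V')ᴴ)) t := by
  have hVJ : (V t)⁻¹ * J = L * (V t)⁻¹ := by
    rw [hJL, ← Matrix.mul_assoc, ← Matrix.mul_assoc,
      nonsing_inv_mul _ ((isUnit_iff_isUnit_det _).mp hVt), Matrix.one_mul]
  rw [← modalTransform_lyapunov hJ hVJ]
  exact hasDerivAt_modalTransform hV hVt hSg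

end Modal

theorem stmt_11_general {n : ℕ}
    (J B Sg V L : ℝ → Matrix (Fin n) (Fin n) ℂ)
    (V' : Matrix (Fin n) (Fin n) ℂ) (t : ℝ)
    (hJreal : ∀ i j, (J t i j).im = 0)
    (hdecomp : J t = V t * L t * (V t)⁻¹)
    (hLdiag : (L t).IsDiag)
    (hVinv : ∀ᶠ s in nhds t, IsUnit (V s))
    (hV : HasDerivAt V V' t)
    (hSg : HasDerivAt Sg (J t * Sg t + Sg t * (J t)ᵀ + B t) t)
    (hSgreal : ∀ i j, (Sg t i j).im = 0)
    (hSgsym : (Sg t)ᵀ = Sg t)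
    (i : Fin n) :
    HasDerivAt (fun s => ((V s)⁻¹ * Sg s * ((V s)⁻¹)ᴴ) i i)
      (2 * (((L t i i).re : ℂ)) * ((V t)⁻¹ * Sg t * ((V t)⁻¹)ᴴ) i i
        + ((V t)⁻¹ * B t * ((V t)⁻¹)ᴴ) i i
        - 2 * (((∑ b, ((V t)⁻¹ * V') i b * ((V t)⁻¹ * Sg t * ((V t)⁻¹)ᴴ) b i).re : ℂ))) t := by
  have hSgH : (Sg t).IsHermitian :=
    (conjTranspose_eq_transpose_of_im_eq_zero hSgreal).trans hSgsym
  have hderiv := hasDerivAt_modalTransform_of_lyapunov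
    (conjTranspose_eq_transpose_of_im_eq_zero hJreal) hdecomp hV hVinv.self_of_nhds hSg
  refine (Matrix.hasDerivAt_iff.mp hderiv i i).congr_deriv ?_
  rw [Matrix.sub_apply, Matrix.add_apply, hLdiag.mul_add_mul_conjTranspose_apply_self,
    hSgH.modalTransform.mul_add_mul_conjTranspose_apply_self, mul_apply]
  rfl

theorem stmt_11 {n : ℕ} (hn : 1 ≤ n)
    (J B Sg V L : ℝ → Matrix (Fin n) (Fin n) ℂ)
    (V' : Matrix (Fin n) (Fin n) ℂ) (t : ℝ)
    (hJreal : ∀ i j, (J t i j).im = 0)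
    (hdecomp : J t = V t * L t * (V t)⁻¹)
    (hLdiag : (L t).IsDiag)
    (hVinv : ∀ᶠ s in nhds t, IsUnit (V s))
    (hV : HasDerivAt V V' t)
    (hSg : HasDerivAt Sg (J t * Sg t + Sg t * (J t)ᵀ + B t) t)
    (hSgreal : ∀ i j, (Sg t i j).im = 0)
    (hSgsym : (Sg t)ᵀ = Sg t)
    (i : Fin n) :
    HasDerivAt (fun s => ((V s)⁻¹ * Sg s * ((V s)⁻¹)ᴴ) i i)
      (2 * (((L t i i).re : ℂ)) * ((V t)⁻¹ * Sg t * ((V t)⁻¹)ᴴ) i i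
        + ((V t)⁻¹ * B t * ((V t)⁻¹)ᴴ) i i
        - 2 * (((∑ b, ((V t)⁻¹ * V') i b * ((V t)⁻¹ * Sg t * ((V t)⁻¹)ᴴ) b i).re : ℂ))) t :=
  stmt_11_general J B Sg V L V' t hJreal hdecomp hLdiag hVinv hV hSg hSgreal hSgsym i
end

section
/- (Symmetric eigenbasis decomposition, Proposition 2.) Let n ≥ 1 and let J, B, Σ : ℝ → Matrix (Fin n) (Fin n) ℝ, with Σ differentiable at t and Σ'(t) = J(t)Σ(t) + Σ(t)J(t)ᵀ + B(t). Write H(t) = (J(t)+J(t)ᵀ)/2 and K(t) = (J(t)−J(t)ᵀ)/2. Let S : ℝ → Matrix (Fin n) (Fin n) ℝ be differentiable at t with S(s) orthogonal (S(s)ᵀ S(s) = 1) for s near t, and Λ_H : ℝ → Matrix (Fin n) (Fin n) ℝ diagonal with H(t) = S(t) Λ_H(t) S(t)ᵀ. Define Σ_H(s) = S(s)ᵀ Σ(s) S(s), B_H = Sᵀ B S, K_H = Sᵀ K S and M_S(t) = S'(t)ᵀ S(t). Then Σ_H is differentiable at t with Σ_H'(t) = (Λ_H Σ_H + Σ_H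 Λ_H) + (K_H Σ_H − Σ_H K_H) + B_H + (M_S Σ_H − Σ_H M_S), all evaluated at t. -/
/-!
Differentiating `Sᵀ S = 1` shows `Sᵀ S' = -M_S`, so the product rule for `Sᵀ Σ S` gives
`Σ_H' = Sᵀ Σ' S + (M_S Σ_H - Σ_H M_S)`. Conjugation by the orthogonal `S` is multiplicative, so
`Sᵀ (J Σ + Σ Jᵀ + B) S = (Sᵀ J S) Σ_H + Σ_H (Sᵀ Jᵀ S) + B_H`, and splitting `J = H + K` with
`Sᵀ H S = Λ_H` turns `Sᵀ J S` into `Λ_H + K_H` and `Sᵀ Jᵀ S` into `Λ_H - K_H`.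
-/

open Matrix

attribute [local instance] Matrix.normedAddCommGroup Matrix.normedSpace

open Filter Topology

theorem conj_mul_of_mul_eq_one {M : Type*} [Monoid M] {p q : M} (h : p * q = 1) (a b : M) :
    q * (a * b) * p = q * a * p * (q * b * p) := by
  simp only [mul_assoc, ← mul_assoc p q, h, one_mul]

section
variable {𝕜 m n : Type*} [NontriviallyNormedField 𝕜] [Fintype m] [Fintype n]
  {A : 𝕜 → Matrix m n 𝕜} {A' : Matrix m n 𝕜} {x : 𝕜}

theorem HasDerivAt.matrix_transpose (hA : HasDerivAt A A' x) :
    HasDerivAt (fun y => (A y)ᵀ) A'ᵀ x :=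
  (ContinuousLinearMap.mk (transposeLinearEquiv m n 𝕜 𝕜).toLinearMap
    continuous_id.matrix_transpose).hasFDerivAt.comp_hasDerivAt x hA
end

section
variable {𝕜 m : Type*} [NontriviallyNormedField 𝕜] [Fintype m] [DecidableEq m]
  {A C : 𝕜 → Matrix m m 𝕜} {A' C' : Matrix m m 𝕜} {x : 𝕜}

attribute [local instance] Matrix.linftyOpNormedRing Matrix.linftyOpNormedAlgebra in
theorem HasDerivAt.matrix_mul_s13 (hA : HasDerivAt A A' x) (hC : HasDerivAt C C' x) :
    HasDerivAt (fun y => A y * C y) (A' * C x + A x * C') x :=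
  hA.fun_mul hC

theorem HasDerivAt.transpose_mul_deriv_eq_neg_of_orthogonal (hA : HasDerivAt A A' x)
    (horth : ∀ᶠ y in 𝓝 x, (A y)ᵀ * A y = 1) : (A x)ᵀ * A' = -(A'ᵀ * A x) := by
  have hconst : HasDerivAt (fun y => (A y)ᵀ * A y) 0 x :=
    (hasDerivAt_const x 1).congr_of_eventuallyEq horth
  exact eq_neg_of_add_eq_zero_right ((hA.matrix_transpose.matrix_mul_s13 hA).unique hconst)

theorem HasDerivAt.transpose_mul_mul_of_orthogonal (hA : HasDerivAt A A' x)
    (horth : ∀ᶠ y in 𝓝 x, (A y)ᵀ * A y = 1) (hC : HasDerivAt C C' x) :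
    HasDerivAt (fun y => (A y)ᵀ * C y * A y)
      ((A x)ᵀ * C' * A x + (A'ᵀ * A x * ((A x)ᵀ * C x * A x)
        - (A x)ᵀ * C x * A x * (A'ᵀ * A x))) x := by
  refine ((hA.matrix_transpose.matrix_mul_s13 hC).matrix_mul_s13 hA).congr_deriv ?_
  have hAAt : A x * (A x)ᵀ = 1 := mul_eq_one_comm.mp horth.self_of_nhds
  rw [sub_eq_add_neg, ← mul_neg, ← hA.transpose_mul_deriv_eq_neg_of_orthogonal horth]
  simp only [add_mul, mul_assoc, ← mul_assoc (A x) (A x)ᵀ, hAAt, one_mul]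
  abel
end

theorem stmt_13_general {n : ℕ}
    (J B Sg S LH : ℝ → Matrix (Fin n) (Fin n) ℝ)
    (S' : Matrix (Fin n) (Fin n) ℝ) (t : ℝ)
    (hSg : HasDerivAt Sg (J t * Sg t + Sg t * (J t)ᵀ + B t) t)
    (hS : HasDerivAt S S' t)
    (horth : ∀ᶠ s in nhds t, (S s)ᵀ * S s = 1)
    (hdecomp : (1 / 2 : ℝ) • (J t + (J t)ᵀ) = S t * LH t * (S t)ᵀ) :
    HasDerivAt (fun s => (S s)ᵀ * Sg s * S s)
      ((LH t * ((S t)ᵀ * Sg t * S t) + ((S t)ᵀ * Sg t * S t) * LH t)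
        + (((S t)ᵀ * ((1 / 2 : ℝ) • (J t - (J t)ᵀ)) * S t) * ((S t)ᵀ * Sg t * S t)
            - ((S t)ᵀ * Sg t * S t) * ((S t)ᵀ * ((1 / 2 : ℝ) • (J t - (J t)ᵀ)) * S t))
        + (S t)ᵀ * B t * S t
        + ((S'ᵀ * S t) * ((S t)ᵀ * Sg t * S t)
            - ((S t)ᵀ * Sg t * S t) * (S'ᵀ * S t))) t := by
  set P := S t
  set K := (1 / 2 : ℝ) • (J t - (J t)ᵀ)
  have hPtP : Pᵀ * P = 1 := horth.self_of_nhds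
  have hPPt : P * Pᵀ = 1 := mul_eq_one_comm.mp hPtP
  have hH : Pᵀ * ((1 / 2 : ℝ) • (J t + (J t)ᵀ)) * P = LH t := by
    simp only [hdecomp, ← mul_assoc, hPtP, one_mul]
    rw [mul_assoc, hPtP, mul_one]
  have hJ : Pᵀ * J t * P = LH t + Pᵀ * K * P := by
    rw [← hH, ← add_mul, ← mul_add]
    congr 2
    module
  have hJt : Pᵀ * (J t)ᵀ * P = LH t - Pᵀ * K * P := by
    rw [← hH, ← sub_mul, ← mul_sub]
    congr 2
    module
  refine (hS.transpose_mul_mul_of_orthogonal horth hSg).congr_deriv ?_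
  rw [mul_add, add_mul, mul_add, add_mul, conj_mul_of_mul_eq_one hPPt,
    conj_mul_of_mul_eq_one hPPt, hJ, hJt]
  noncomm_ring

theorem stmt_13 {n : ℕ} (hn : 1 ≤ n)
    (J B Sg S LH : ℝ → Matrix (Fin n) (Fin n) ℝ)
    (S' : Matrix (Fin n) (Fin n) ℝ) (t : ℝ)
    (hSg : HasDerivAt Sg (J t * Sg t + Sg t * (J t)ᵀ + B t) t)
    (hS : HasDerivAt S S' t)
    (horth : ∀ᶠ s in nhds t, (S s)ᵀ * S s = 1)
    (hLHdiag : (LH t).IsDiag)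
    (hdecomp : (1 / 2 : ℝ) • (J t + (J t)ᵀ) = S t * LH t * (S t)ᵀ) :
    HasDerivAt (fun s => (S s)ᵀ * Sg s * S s)
      ((LH t * ((S t)ᵀ * Sg t * S t) + ((S t)ᵀ * Sg t * S t) * LH t)
        + (((S t)ᵀ * ((1 / 2 : ℝ) • (J t - (J t)ᵀ)) * S t) * ((S t)ᵀ * Sg t * S t)
            - ((S t)ᵀ * Sg t * S t) * ((S t)ᵀ * ((1 / 2 : ℝ) • (J t - (J t)ᵀ)) * S t))
        + (S t)ᵀ * B t * S t
        + ((S'ᵀ * S t) * ((S t)ᵀ * Sg t * S t)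
            - ((S t)ᵀ * Sg t * S t) * (S'ᵀ * S t))) t :=
  stmt_13_general J B Sg S LH S' t hSg hS horth hdecomp
end

section
/- (Variance evolution in the modal basis.) Let n ≥ 1. Let Λ, M, B_y, Σ_y : ℝ → Matrix (Fin n) (Fin n) ℂ and g : ℝ → (Fin n → ℂ). Suppose at time t: Σ_y is differentiable with Σ_y'(t) = Λ(t)Σ_y(t) + Σ_y(t)Λ(t)ᴴ + B_y(t) − M(t)Σ_y(t) − Σ_y(t)M(t)ᴴ, and g is differentiable with g'(t) = M(t)ᴴ *ᵥ g(t). Then the scalar function s ↦ (star (g(s))) ⬝ᵥ (Σ_y(s) *ᵥ g(s)) is differentiable at t with derivative (star (g(t))) ⬝ᵥ ((Λ(t)Σ_y(t) + Σ_y(t)Λ(t)ᴴ + B_y(t)) *ᵥ g(t)); i.e. the rotational/eigenbasis-evolution terms involving M cancel exactly in the evolution of the quadratic form gᴴ Σ_y g. -/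
/-! Differentiating the quadratic form `star g ⬝ᵥ (Σ *ᵥ g)` by the product rule gives three terms.
The two coming from `g' = Mᴴ g` add up to `star g ⬝ᵥ ((M Σ + Σ Mᴴ) *ᵥ g)`, since
`star (Mᴴ g) = star g ᵥ* M`, and this is exactly what the `-MΣ - ΣMᴴ` part of `Σ'` removes. -/

open Matrix

attribute [local instance] Matrix.normedAddCommGroup Matrix.normedSpace

section Calculus

variable {𝕜 : Type*} [NontriviallyNormedField 𝕜] {R : Type*} [NormedRing R] [NormedAlgebra 𝕜 R]
  {m n : Type*} [Fintype n] {x : 𝕜}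

theorem HasDerivAt.dotProduct {u v : 𝕜 → n → R} {u' v' : n → R}
    (hu : HasDerivAt u u' x) (hv : HasDerivAt v v' x) :
    HasDerivAt (fun s => u s ⬝ᵥ v s) (u' ⬝ᵥ v x + u x ⬝ᵥ v') x := by
  have hcoord : ∀ i ∈ Finset.univ, HasDerivAt (fun s => u s i * v s i)
      (u' i * v x i + u x i * v' i) x := fun i _ =>
    (hasDerivAt_pi.mp hu i).mul (hasDerivAt_pi.mp hv i)
  simpa only [_root_.dotProduct, Finset.sum_add_distrib] using HasDerivAt.fun_sum hcoord

theorem HasDerivAt.mulVec {A : 𝕜 → Matrix m n R} {A' : Matrix m n R} {v : 𝕜 → n → R}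
    {v' : n → R} (hA : HasDerivAt A A' x) (hv : HasDerivAt v v' x) :
    HasDerivAt (fun s => A s *ᵥ v s) (A' *ᵥ v x + A x *ᵥ v') x :=
  hasDerivAt_pi.mpr fun i => (hasDerivAt_pi.mp hA i).dotProduct hv

end Calculus

theorem Matrix.star_dotProduct_mul_add_mul_conjTranspose_mulVec {R n : Type*} [CommRing R]
    [StarRing R] [Fintype n] (M S : Matrix n n R) (g : n → R) :
    star g ⬝ᵥ ((M * S + S * Mᴴ) *ᵥ g) =
      star (Mᴴ *ᵥ g) ⬝ᵥ (S *ᵥ g) + star g ⬝ᵥ (S *ᵥ (Mᴴ *ᵥ g)) := by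
  rw [star_mulVec, conjTranspose_conjTranspose, ← dotProduct_mulVec, mulVec_mulVec,
    mulVec_mulVec, add_mulVec, dotProduct_add]

theorem stmt_16_general {n : ℕ}
    (L M By Sy : ℝ → Matrix (Fin n) (Fin n) ℂ)
    (g : ℝ → Fin n → ℂ) (t : ℝ)
    (hSy : HasDerivAt Sy
      (L t * Sy t + Sy t * (L t)ᴴ + By t - M t * Sy t - Sy t * (M t)ᴴ) t)
    (hg : HasDerivAt g ((M t)ᴴ *ᵥ g t) t) :
    HasDerivAt (fun s => star (g s) ⬝ᵥ (Sy s *ᵥ g s))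
      (star (g t) ⬝ᵥ ((L t * Sy t + Sy t * (L t)ᴴ + By t) *ᵥ g t)) t := by
  refine (hg.star.dotProduct (hSy.mulVec hg)).congr_deriv ?_
  rw [sub_sub, sub_mulVec, dotProduct_add, dotProduct_sub,
    star_dotProduct_mul_add_mul_conjTranspose_mulVec]
  abel

theorem stmt_16 {n : ℕ} (hn : 1 ≤ n)
    (L M By Sy : ℝ → Matrix (Fin n) (Fin n) ℂ)
    (g : ℝ → Fin n → ℂ) (t : ℝ)
    (hSy : HasDerivAt Sy
      (L t * Sy t + Sy t * (L t)ᴴ + By t - M t * Sy t - Sy t * (M t)ᴴ) t)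
    (hg : HasDerivAt g ((M t)ᴴ *ᵥ g t) t) :
    HasDerivAt (fun s => star (g s) ⬝ᵥ (Sy s *ᵥ g s))
      (star (g t) ⬝ᵥ ((L t * Sy t + Sy t * (L t)ᴴ + By t) *ᵥ g t)) t :=
  stmt_16_general L M By Sy g t hSy hg
end
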